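/- Every tree of the block forest F of a digraph G, rooted arbitrarily, satisfies: two distinct vertices u, w of G are vertex-resilient if and only if, in the rooted forest F, u and w are siblings or one is the grandparent of the other. -/

import Mathlib

variable {V : Type*}

/-- Mutual reachability (strong connectivity of a pair) in the digraph `E`. -/
def SConn (E : V → V → Prop) (u v : V) : Prop :=
  Relation.ReflTransGen E u v ∧ Relation.ReflTransGen E v u

/-- The digraph obtained from `E` by deleting vertex `w` (and incident edges). -/
def delV (E : V → V → Prop) (w : V) : V → V → Prop :=
  fun a b => E a b ∧ a ≠ w ∧ b ≠ w

/-- The digraph obtained from `E` by deleting the single edge `(a,b)`. -/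
def delE (E : V → V → Prop) (a b : V) : V → V → Prop :=
  fun x y => E x y ∧ ¬(x = a ∧ y = b)

/-- `u` and `v` are vertex-resilient: they are distinct and remain strongly
connected after deletion of any single other vertex. -/
def VRes (E : V → V → Prop) (u v : V) : Prop :=
  u ≠ v ∧ ∀ w, w ≠ u → w ≠ v → SConn (delV E w) u v

/-- A vertex-resilient block: a maximal set of size ≥ 2 of pairwise
vertex-resilient vertices. -/
def IsVRBlock (E : V → V → Prop) (B : Set V) : Prop :=
  B.Pairwise (VRes E) ∧ (∃ a ∈ B, ∃ b ∈ B, a ≠ b) ∧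
    ∀ B' : Set V, B ⊆ B' → B'.Pairwise (VRes E) → B' = B

/-- `l` is (the vertex list of) a directed path from `u` to `v` in `E`. -/
def IsPathList (E : V → V → Prop) (u v : V) (l : List V) : Prop :=
  l.Chain' E ∧ l.head? = some u ∧ l.getLast? = some v

/-- The internal vertices of a path given as a vertex list. -/
def internalsL (l : List V) : List V := (l.drop 1).dropLast

/-- The edges of a path given as a vertex list. -/
def edgesOfL (l : List V) : List (V × V) := l.zip l.tail

/-- There exist two internally vertex-disjoint (simple, distinct) paths from `u` to `v`. -/
def TwoVPaths (E : V → V → Prop) (u v : V) : Prop :=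
  ∃ l₁ l₂ : List V, IsPathList E u v l₁ ∧ IsPathList E u v l₂ ∧
    l₁.Nodup ∧ l₂.Nodup ∧ l₁ ≠ l₂ ∧ ∀ x ∈ internalsL l₁, x ∉ internalsL l₂

/-- `u` and `v` are 2-vertex-connected. -/
def TwoVConn (E : V → V → Prop) (u v : V) : Prop :=
  u ≠ v ∧ TwoVPaths E u v ∧ TwoVPaths E v u

/-- There exist two edge-disjoint paths from `u` to `v`. -/
def TwoEPaths (E : V → V → Prop) (u v : V) : Prop :=
  ∃ l₁ l₂ : List V, IsPathList E u v l₁ ∧ IsPathList E u v l₂ ∧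
    ∀ e ∈ edgesOfL l₁, e ∉ edgesOfL l₂

/-- `u` and `v` are 2-edge-connected. -/
def TwoEConn (E : V → V → Prop) (u v : V) : Prop :=
  u ≠ v ∧ TwoEPaths E u v ∧ TwoEPaths E v u

/-- A 2-vertex-connected block. -/
def Is2VBlock (E : V → V → Prop) (B : Set V) : Prop :=
  B.Pairwise (TwoVConn E) ∧ (∃ a ∈ B, ∃ b ∈ B, a ≠ b) ∧
    ∀ B' : Set V, B ⊆ B' → B'.Pairwise (TwoVConn E) → B' = B

/-- A 2-edge-connected block. -/
def Is2EBlock (E : V → V → Prop) (B : Set V) : Prop :=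
  B.Pairwise (TwoEConn E) ∧ (∃ a ∈ B, ∃ b ∈ B, a ≠ b) ∧
    ∀ B' : Set V, B ⊆ B' → B'.Pairwise (TwoEConn E) → B' = B

/-- The digraph `E` is strongly connected. -/
def StronglyConn (E : V → V → Prop) : Prop :=
  ∀ u v, Relation.ReflTransGen E u v

/-- `(a,b)` is a strong bridge of the strongly connected digraph `E`. -/
def IsStrongBridge (E : V → V → Prop) (a b : V) : Prop :=
  E a b ∧ ¬ StronglyConn (delE E a b)

/-- `u` dominates `w` in the flow graph with start vertex `s`:
every path from `s` to `w` contains `u`. -/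
def DomOf (E : V → V → Prop) (s u w : V) : Prop :=
  ∀ l : List V, IsPathList E s w l → u ∈ l

/-- `d` is the immediate dominator of `w` in the flow graph with start `s`:
the proper dominator of `w` dominated by all proper dominators of `w`. -/
def IdomOf (E : V → V → Prop) (s d w : V) : Prop :=
  d ≠ w ∧ DomOf E s d w ∧ ∀ u, u ≠ w → DomOf E s u w → DomOf E s u d

/-- The block graph `F` of the digraph `E`: the bipartite undirected graph on the
vertices of `E` together with its vertex-resilient blocks, a vertex `u` being
adjacent to a block node `B` exactly when `u ∈ B`. -/
def blockGraph (E : V → V → Prop) :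
    SimpleGraph (V ⊕ {B : Set V // IsVRBlock E B}) where
  Adj a b := ∃ u B, u ∈ B.1 ∧
    ((a = Sum.inl u ∧ b = Sum.inr B) ∨ (a = Sum.inr B ∧ b = Sum.inl u))
  symm := ⟨by
    rintro a b ⟨u, B, hm, (⟨rfl, rfl⟩ | ⟨rfl, rfl⟩)⟩
    · exact ⟨u, B, hm, Or.inr ⟨rfl, rfl⟩⟩
    · exact ⟨u, B, hm, Or.inl ⟨rfl, rfl⟩⟩⟩
  loopless := ⟨by
    rintro a ⟨u, B, hm, (⟨rfl, h⟩ | ⟨rfl, h⟩)⟩ <;> simp at h⟩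

/-! Two vertices are vertex-resilient iff they lie in a common block (blocks are maximal
pairwise resilient sets, which exist by Zorn's lemma), i.e. iff they are joined in `F` through a
block node. In a rooted forest every edge joins a node to its parent, so such vertices are
siblings or grandparent and grandchild.

That `F` is a forest comes down to every edge `a — B` being a bridge. Otherwise a walk in `F`
leads from a block `B₁ ∋ a`, `B₁ ≠ B`, to `B` avoiding the node `a`. Deleting `a` from `G`, the
members of consecutive nodes of that walk stay strongly connected; deleting any other vertex,
`B₁` and `B` stay strongly connected through `a`. So `B₁ ∪ B` is pairwise resilient and
`B₁ = B` by maximality. -/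

namespace SimpleGraph

variable {α : Type*} {G : SimpleGraph α} {p : α → α}

lemma reachable_iterate (hp : ∀ a, p a = a ∨ G.Adj a (p a)) (n : ℕ) (a : α) :
    G.Reachable a (p^[n] a) := by
  induction n generalizing a with
  | zero => exact .refl a
  | succ n ih =>
    have hstep : G.Reachable a (p a) := (hp a).elim (fun h => by rw [h]) Adj.reachable
    exact hstep.trans (ih (p a))

lemma exists_fixedPoint_reachable (hp : ∀ a, p a = a ∨ G.Adj a (p a))
    (hfix : ∀ a, ∃ n : ℕ, p^[n + 1] a = p^[n] a) (a : α) :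
    ∃ r, p r = r ∧ G.Reachable a r := by
  obtain ⟨n, hn⟩ := hfix a
  exact ⟨p^[n] a, by rwa [← Function.iterate_succ_apply' p n a], reachable_iterate hp n a⟩

/-- If neither endpoint of `xy` is the parent of the other, all parent steps survive deleting
`xy`, so `x` and `y` still reach their common root and `xy` is not a bridge. -/
lemma IsAcyclic.parent_eq_or_parent_eq_of_adj (hG : G.IsAcyclic)
    (hp : ∀ a, p a = a ∨ G.Adj a (p a)) (hfix : ∀ a, ∃ n : ℕ, p^[n + 1] a = p^[n] a)
    (huniq : ∀ a b, G.Reachable a b → p a = a → p b = b → a = b)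
    {x y : α} (hxy : G.Adj x y) : p x = y ∨ p y = x := by
  by_contra! hne
  set H := G.deleteEdges {s(x, y)}
  have hpH : ∀ a, p a = a ∨ H.Adj a (p a) := by
    intro a
    refine (hp a).imp_right fun ha => (deleteEdges_adj ..).mpr ⟨ha, ?_⟩
    rw [Set.mem_singleton_iff, Sym2.eq_iff]
    rintro (⟨rfl, h⟩ | ⟨rfl, h⟩)
    exacts [hne.1 h, hne.2 h]
  obtain ⟨rx, hrx, hxrx⟩ := exists_fixedPoint_reachable hpH hfix x
  obtain ⟨ry, hry, hyry⟩ := exists_fixedPoint_reachable hpH hfix y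
  have hroots : rx = ry := huniq rx ry
    (((hxrx.mono (deleteEdges_le _)).symm.trans hxy.reachable).trans
      (hyry.mono (deleteEdges_le _))) hrx hry
  exact isBridge_iff.mp (isAcyclic_iff_forall_adj_isBridge.mp hG hxy)
    (hxrx.trans (hroots ▸ hyry.symm))

end SimpleGraph

section Resilience

variable {E : V → V → Prop} {u v w z : V}

lemma SConn.refl (D : V → V → Prop) (u : V) : SConn D u u := ⟨.refl, .refl⟩

lemma SConn.symm {D : V → V → Prop} (h : SConn D u v) : SConn D v u := And.symm h

lemma SConn.trans {D : V → V → Prop} (h : SConn D u v) (h' : SConn D v w) : SConn D u w :=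
  ⟨h.1.trans h'.1, h'.2.trans h.2⟩

lemma VRes.symm (h : VRes E u v) : VRes E v u :=
  ⟨h.1.symm, fun z hzv hzu => (h.2 z hzu hzv).symm⟩

lemma Set.Pairwise.sconn_delV {S : Set V} (hS : S.Pairwise (VRes E)) (hu : u ∈ S) (hv : v ∈ S)
    (hzu : z ≠ u) (hzv : z ≠ v) : SConn (delV E z) u v := by
  obtain rfl | huv := eq_or_ne u v
  · exact .refl _ u
  · exact (hS hu hv huv).2 z hzu hzv

lemma IsVRBlock.eq_of_forall_vres {B₁ B₂ : Set V} (h₁ : IsVRBlock E B₁) (h₂ : IsVRBlock E B₂)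
    (hcross : ∀ x ∈ B₁, ∀ y ∈ B₂, x ≠ y → VRes E x y) : B₁ = B₂ := by
  have hunion : (B₁ ∪ B₂).Pairwise (VRes E) := Set.pairwise_union.mpr
    ⟨h₁.1, h₂.1, fun x hx y hy hxy => ⟨hcross x hx y hy hxy, (hcross x hx y hy hxy).symm⟩⟩
  rw [← h₁.2.2 _ Set.subset_union_left hunion, h₂.2.2 _ Set.subset_union_right hunion]

lemma exists_isVRBlock_of_vres (h : VRes E u w) : ∃ B, IsVRBlock E B ∧ u ∈ B ∧ w ∈ B := by
  have hpair : ({u, w} : Set V).Pairwise (VRes E) :=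
    Set.pairwise_pair.mpr fun _ => ⟨h, h.symm⟩
  obtain ⟨M, hsub, hM⟩ := zorn_subset_nonempty {T : Set V | T.Pairwise (VRes E)}
    (fun c hc hchain _ => ⟨⋃₀ c, hchain.pairwise_sUnion.mpr hc,
      fun _ => Set.subset_sUnion_of_mem⟩) _ hpair
  have hu : u ∈ M := hsub (by simp)
  have hw : w ∈ M := hsub (by simp)
  exact ⟨M, ⟨hM.1, ⟨u, hu, w, hw, h.1⟩, fun B' hMB' hB' => (hM.eq_of_le hB' hMB').symm⟩, hu, hw⟩

end Resilience

section BlockGraph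

open SimpleGraph

variable {E : V → V → Prop} {u v z : V} {B : {B : Set V // IsVRBlock E B}}

def nodeMembers (E : V → V → Prop) : V ⊕ {B : Set V // IsVRBlock E B} → Set V
  | .inl v => {v}
  | .inr B => B.1

lemma pairwise_nodeMembers (n : V ⊕ {B : Set V // IsVRBlock E B}) :
    (nodeMembers E n).Pairwise (VRes E) := by
  cases n with
  | inl v => exact Set.pairwise_singleton _ _
  | inr B => exact B.2.1

@[simp] lemma blockGraph_adj_inl_inr : (blockGraph E).Adj (.inl u) (.inr B) ↔ u ∈ B.1 := by
  simp [blockGraph]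

@[simp] lemma blockGraph_adj_inr_inl : (blockGraph E).Adj (.inr B) (.inl u) ↔ u ∈ B.1 := by
  simp [blockGraph]

@[simp] lemma not_blockGraph_adj_inl_inl : ¬ (blockGraph E).Adj (.inl u) (.inl v) := by
  simp [blockGraph]

@[simp] lemma not_blockGraph_adj_inr_inr {B' : {B : Set V // IsVRBlock E B}} :
    ¬ (blockGraph E).Adj (.inr B) (.inr B') := by
  simp [blockGraph]

lemma sconn_delV_of_walk {s t : V ⊕ {B : Set V // IsVRBlock E B}} (q : (blockGraph E).Walk s t)
    (hz : .inl z ∉ q.support) {x y : V} (hx : x ∈ nodeMembers E s) (hy : y ∈ nodeMembers E t)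
    (hzx : z ≠ x) (hzy : z ≠ y) : SConn (delV E z) x y := by
  induction q generalizing x with
  | nil => exact (pairwise_nodeMembers _).sconn_delV hx hy hzx hzy
  | @cons s t _ h q ih =>
    rw [Walk.support_cons, List.mem_cons, not_or] at hz
    obtain ⟨v, hvs, hvt, hzv⟩ : ∃ v ∈ nodeMembers E s, v ∈ nodeMembers E t ∧ z ≠ v := by
      rcases s with a | C <;> rcases t with b | D <;> simp only [blockGraph_adj_inl_inr,
        blockGraph_adj_inr_inl, not_blockGraph_adj_inl_inl, not_blockGraph_adj_inr_inr] at h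
      · exact ⟨a, rfl, h, by rintro rfl; exact hzx (Set.mem_singleton_iff.mp hx).symm⟩
      · refine ⟨b, h, rfl, ?_⟩
        rintro rfl
        exact hz.2 q.start_mem_support
    exact ((pairwise_nodeMembers s).sconn_delV hx hvs hzx hzv).trans (ih hz.2 hvt hy hzv)

lemma IsVRBlock.eq_of_walk_avoiding {B₁ B₂ : {B : Set V // IsVRBlock E B}}
    (q : (blockGraph E).Walk (.inr B₁) (.inr B₂)) {a : V} (ha₁ : a ∈ B₁.1) (ha₂ : a ∈ B₂.1)
    (hq : .inl a ∉ q.support) : B₁ = B₂ := by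
  refine Subtype.ext (B₁.2.eq_of_forall_vres B₂.2 fun x hx y hy hxy => ⟨hxy, fun z hzx hzy => ?_⟩)
  obtain rfl | hza := eq_or_ne z a
  · exact sconn_delV_of_walk q hq hx hy hzx hzy
  · exact (B₁.2.1.sconn_delV hx ha₁ hzx hza).trans (B₂.2.1.sconn_delV ha₂ hy hza hzy)

lemma isBridge_blockGraph (hu : u ∈ B.1) : (blockGraph E).IsBridge s(.inl u, .inr B) := by
  classical
  refine isBridge_iff_forall_walk_mem_edges.mpr fun q => ?_
  by_contra hq
  have hpath := q.bypass_isPath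
  have hbypass : s(Sum.inl u, Sum.inr B) ∉ q.bypass.edges :=
    fun h => hq (q.edges_bypass_subset_edges h)
  generalize q.bypass = r at hpath hbypass
  cases r with
  | @cons _ n _ h r =>
    rcases n with b | C
    · exact not_blockGraph_adj_inl_inl h
    · rw [Walk.cons_isPath_iff] at hpath
      obtain rfl := IsVRBlock.eq_of_walk_avoiding r (blockGraph_adj_inl_inr.mp h) hu hpath.2
      exact hbypass (by simp)

theorem blockGraph_isAcyclic (E : V → V → Prop) : (blockGraph E).IsAcyclic := by
  refine isAcyclic_iff_forall_adj_isBridge.mpr fun x y h => ?_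
  rcases x with a | C <;> rcases y with b | D
  · exact absurd h not_blockGraph_adj_inl_inl
  · exact isBridge_blockGraph (blockGraph_adj_inl_inr.mp h)
  · rw [Sym2.eq_swap]
    exact isBridge_blockGraph (blockGraph_adj_inr_inl.mp h)
  · exact absurd h not_blockGraph_adj_inr_inr

variable {parent : V ⊕ {B : Set V // IsVRBlock E B} → V ⊕ {B : Set V // IsVRBlock E B}}
  (hadj : ∀ x, parent x = x ∨ (blockGraph E).Adj x (parent x))
include hadj

lemma eq_of_parent_inl_eq_inl (h : parent (.inl u) = .inl v) : u = v := by
  rcases hadj (.inl u) with hu | hu <;> rw [h] at hu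
  · exact (Sum.inl.inj hu).symm
  · exact absurd hu not_blockGraph_adj_inl_inl

lemma mem_of_parent_inl_eq_inr (h : parent (.inl u) = .inr B) : u ∈ B.1 := by
  rcases hadj (.inl u) with hu | hu <;> rw [h] at hu
  · exact absurd hu Sum.inr_ne_inl
  · exact blockGraph_adj_inl_inr.mp hu

lemma mem_of_parent_inr_eq_inl (h : parent (.inr B) = .inl u) : u ∈ B.1 := by
  rcases hadj (.inr B) with hB | hB <;> rw [h] at hB
  · exact absurd hB Sum.inl_ne_inr
  · exact blockGraph_adj_inr_inl.mp hB

lemma vres_of_parent_eq (huw : u ≠ v) (h : parent (.inl u) = parent (.inl v)) : VRes E u v := by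
  cases hpu : parent (.inl u) with
  | inl a =>
    obtain rfl := eq_of_parent_inl_eq_inl hadj hpu
    exact absurd (eq_of_parent_inl_eq_inl hadj (h.symm.trans hpu)) huw.symm
  | inr B =>
    exact B.2.1 (mem_of_parent_inl_eq_inr hadj hpu)
      (mem_of_parent_inl_eq_inr hadj (h.symm.trans hpu)) huw

lemma vres_of_parent_parent_eq (huv : u ≠ v) (h : parent (parent (.inl v)) = .inl u) :
    VRes E u v := by
  cases hpv : parent (.inl v) with
  | inl a =>
    obtain rfl := eq_of_parent_inl_eq_inl hadj hpv
    rw [hpv, hpv] at h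
    exact absurd (Sum.inl.inj h) huv.symm
  | inr B =>
    rw [hpv] at h
    exact B.2.1 (mem_of_parent_inr_eq_inl hadj h) (mem_of_parent_inl_eq_inr hadj hpv) huv

end BlockGraph

/-- `parent` encodes the rooting of `F`: the roots are its fixed points. -/
theorem stmt13_general (E : V → V → Prop)
    (parent : (V ⊕ {B : Set V // IsVRBlock E B}) → (V ⊕ {B : Set V // IsVRBlock E B}))
    (hadj : ∀ x, parent x = x ∨ (blockGraph E).Adj x (parent x))
    (hfix : ∀ x, ∃ n : ℕ, parent^[n + 1] x = parent^[n] x)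
    (huniq : ∀ x y, (blockGraph E).Reachable x y →
      parent x = x → parent y = y → x = y)
    (u w : V) (huw : u ≠ w) :
    VRes E u w ↔
      (parent (Sum.inl u) = parent (Sum.inl w) ∨
       parent (parent (Sum.inl w)) = Sum.inl u ∨
       parent (parent (Sum.inl u)) = Sum.inl w) := by
  refine ⟨fun hvr => ?_, ?_⟩
  · obtain ⟨B, hB, huB, hwB⟩ := exists_isVRBlock_of_vres hvr
    have hforest : ∀ {x y}, (blockGraph E).Adj x y → parent x = y ∨ parent y = x :=
      (blockGraph_isAcyclic E).parent_eq_or_parent_eq_of_adj hadj hfix huniq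
    rcases hforest ((blockGraph_adj_inl_inr (B := ⟨B, hB⟩)).mpr huB) with hu | hu <;>
      rcases hforest ((blockGraph_adj_inl_inr (B := ⟨B, hB⟩)).mpr hwB) with hw | hw
    · exact .inl (hu.trans hw.symm)
    · exact .inr (.inr (by rw [hu, hw]))
    · exact .inr (.inl (by rw [hw, hu]))
    · exact absurd (Sum.inl.inj (hu.symm.trans hw)) huw
  · rintro (h | h | h)
    · exact vres_of_parent_eq hadj huw h
    · exact vres_of_parent_parent_eq hadj huw h
    · exact (vres_of_parent_parent_eq hadj huw.symm h).symm

/-- root each tree of the block forest `F` at an arbitrary vertex of `V`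
(this rooting is encoded by a parent function: roots are fixed points and are
vertices of `V`, every parent is adjacent in `F`, iterating parent eventually
stabilizes at the root, and each connected component has a unique root).
Then two distinct vertices `u,w` of `G` are vertex-resilient iff `u` and `w`
are siblings in the rooted forest or one is the grandparent of the other. -/
theorem stmt13 (E : V → V → Prop)
    (parent : (V ⊕ {B : Set V // IsVRBlock E B}) → (V ⊕ {B : Set V // IsVRBlock E B}))
    (hadj : ∀ x, parent x = x ∨ (blockGraph E).Adj x (parent x))
    (hroot : ∀ x, parent x = x → ∃ r : V, x = Sum.inl r)
    (hfix : ∀ x, ∃ n : ℕ, parent^[n + 1] x = parent^[n] x)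
    (huniq : ∀ x y, (blockGraph E).Reachable x y →
      parent x = x → parent y = y → x = y)
    (u w : V) (huw : u ≠ w) :
    VRes E u w ↔
      (parent (Sum.inl u) = parent (Sum.inl w) ∨
       parent (parent (Sum.inl w)) = Sum.inl u ∨
       parent (parent (Sum.inl u)) = Sum.inl w) :=
  stmt13_general E parent hadj hfix huniq u w huw
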